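/- arXiv:0705.0120 — 2 statements merged into one kernel-verified Lean document; each statement's English description precedes it below -/
import Mathlib

section
/- Let A be an n×n complex matrix, y ∈ ℂ with det(A − yI) = 0, and suppose t := Tr(adj(A − yI)) ≠ 0. Set P := t⁻¹ · adj(A − yI). Then P² = P, A·P = P·A = y·P, and P has rank one. -/
open Matrix

lemma trace_vecMulVec' {n : ℕ} (w v : Fin n → ℂ) :
    Matrix.trace (vecMulVec w v) = ∑ k, w k * v k := by
  simp [Matrix.trace, Matrix.diag, vecMulVec_apply]

lemma vecMulVec_mul_vecMulVec' {n : ℕ} (w v : Fin n → ℂ) :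
    vecMulVec w v * vecMulVec w v = (∑ k, w k * v k) • vecMulVec w v := by
  ext i j
  simp only [Matrix.mul_apply, vecMulVec_apply, Matrix.smul_apply, smul_eq_mul,
    Finset.sum_mul]
  exact Finset.sum_congr rfl fun k _ => by ring

/-- If `det B = 0` and the adjugate has nonzero trace, then the adjugate is an outer
product of two vectors. -/
lemma adjugate_eq_vecMulVec {n : ℕ} (B : Matrix (Fin n) (Fin n) ℂ)
    (hdet : B.det = 0) (htr : Matrix.trace (adjugate B) ≠ 0) :
    ∃ w v : Fin n → ℂ, adjugate B = vecMulVec w v := by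
  classical
  obtain ⟨u, hu0, huK⟩ := (Matrix.exists_mulVec_eq_zero_iff).mpr hdet
  set K := LinearMap.ker B.mulVecLin with hK
  have huK' : u ∈ K := by simpa [hK, Matrix.mulVecLin_apply] using huK
  by_cases hdim : Module.finrank ℂ K ≤ 1
  · -- main case: kernel is one-dimensional
    have hspan : Submodule.span ℂ {u} = K := by
      apply Submodule.eq_of_le_of_finrank_le
      · rwa [Submodule.span_singleton_le_iff_mem]
      · rw [finrank_span_singleton hu0]; exact hdim
    -- each column of the adjugate is in span {u}
    have hcol : ∀ j, ∃ c : ℂ, (adjugate B) *ᵥ Pi.single j 1 = c • u := by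
      intro j
      have hmem : (adjugate B) *ᵥ Pi.single j 1 ∈ K := by
        rw [hK, LinearMap.mem_ker, Matrix.mulVecLin_apply, Matrix.mulVec_mulVec,
          Matrix.mul_adjugate, hdet, zero_smul, Matrix.zero_mulVec]
      rw [← hspan] at hmem
      obtain ⟨c, hc⟩ := Submodule.mem_span_singleton.mp hmem
      exact ⟨c, hc.symm⟩
    choose c hc using hcol
    refine ⟨u, c, ?_⟩
    ext i j
    have := congrFun (hc j) i
    simp only [Matrix.mulVec_single, op_smul_eq_mul, Matrix.col_apply, mul_one, Pi.smul_apply, smul_eq_mul] at this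
    rw [vecMulVec_apply, this, mul_comm]
  · -- degenerate case: kernel has dimension ≥ 2; show the adjugate vanishes
    exfalso
    push_neg at hdim
    have hrn : Module.finrank ℂ (LinearMap.range B.mulVecLin) + Module.finrank ℂ K = n := by
      rw [hK, LinearMap.finrank_range_add_finrank_ker]
      simp
    have hrank : B.rank + 2 ≤ n := by
      have : B.rank = Module.finrank ℂ (LinearMap.range B.mulVecLin) := rfl
      omega
    apply htr
    have hadj : adjugate B = 0 := by
      ext i j
      simp only [Matrix.zero_apply]
      rw [Matrix.adjugate_apply]
      set M := B.updateRow j (Pi.single i 1) with hM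
      -- rows of B other than row j are linearly dependent
      have hle : Submodule.span ℂ (Set.range (fun k : {k : Fin n // k ≠ j} => B k.1)) ≤
          LinearMap.range Bᵀ.mulVecLin := by
        rw [Submodule.span_le]
        rintro x ⟨k, rfl⟩
        refine ⟨Pi.single k.1 1, ?_⟩
        ext i'
        simp [Matrix.mulVecLin_apply, Matrix.mulVec_single, Matrix.transpose_apply]
      have hdep : ¬ LinearIndependent ℂ (fun k : {k : Fin n // k ≠ j} => B k.1) := by
        intro hind
        have hcard : Module.finrank ℂ
            (Submodule.span ℂ (Set.range (fun k : {k : Fin n // k ≠ j} => B k.1)))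
            = Fintype.card {k : Fin n // k ≠ j} := finrank_span_eq_card hind
        have hcard2 : Fintype.card {k : Fin n // k ≠ j} = n - 1 := by
          simp [Fintype.card_subtype_compl]
        have hmono := Submodule.finrank_mono hle
        have hrt : Module.finrank ℂ (LinearMap.range Bᵀ.mulVecLin) = B.rank := by
          rw [show Module.finrank ℂ (LinearMap.range Bᵀ.mulVecLin) = Bᵀ.rank from rfl,
            Matrix.rank_transpose]
        rw [hcard, hcard2, hrt] at hmono
        omega
      obtain ⟨g, hsum, k₀, hk₀⟩ := Fintype.not_linearIndependent_iff.mp hdep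
      -- build a left-kernel vector for M
      set cvec : Fin n → ℂ := fun k => if hkj : k = j then 0 else g ⟨k, hkj⟩ with hcvec
      have hcne : cvec ≠ 0 := by
        intro h0
        apply hk₀
        have := congrFun h0 k₀.1
        simpa [hcvec, k₀.2] using this
      rw [← Matrix.det_transpose]
      rw [← Matrix.exists_mulVec_eq_zero_iff]
      refine ⟨cvec, hcne, ?_⟩
      ext i'
      have hrel := congrFun hsum i'
      simp only [Finset.sum_apply, Pi.smul_apply, smul_eq_mul, Pi.zero_apply] at hrel
      simp only [Matrix.mulVec, dotProduct, Matrix.transpose_apply, Pi.zero_apply]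
      have hFj : M j i' * cvec j = 0 := by simp [hcvec]
      calc ∑ k, M k i' * cvec k
          = ∑ k ∈ Finset.univ.erase j, M k i' * cvec k := by
            rw [← Finset.sum_erase_add Finset.univ _ (Finset.mem_univ j), hFj, add_zero]
        _ = ∑ k : {k : Fin n // k ≠ j}, M k.1 i' * cvec k.1 :=
            Finset.sum_subtype _ (by simp) _
        _ = ∑ k : {k : Fin n // k ≠ j}, g k * B k.1 i' := by
            refine Finset.sum_congr rfl fun k _ => ?_
            rcases k with ⟨k, hk⟩
            simp [hM, hcvec, Matrix.updateRow_apply, hk, mul_comm]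
        _ = 0 := hrel
    rw [hadj]
    simp

theorem spectral_projector {n : ℕ} (A : Matrix (Fin n) (Fin n) ℂ) (y : ℂ)
    (h : (A - y • (1 : Matrix (Fin n) (Fin n) ℂ)).det = 0)
    (t : ℂ) (ht : t = Matrix.trace (adjugate (A - y • 1))) (ht0 : t ≠ 0)
    (P : Matrix (Fin n) (Fin n) ℂ) (hP : P = t⁻¹ • adjugate (A - y • 1)) :
    P * P = P ∧ A * P = y • P ∧ P * A = y • P ∧ P.rank = 1 := by
  classical
  set B : Matrix (Fin n) (Fin n) ℂ := A - y • 1 with hB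
  obtain ⟨w, v, hwv⟩ := adjugate_eq_vecMulVec B h (by rw [← ht]; exact ht0)
  have htsum : t = ∑ k, w k * v k := by rw [ht, hwv, trace_vecMulVec']
  have hsq : adjugate B * adjugate B = t • adjugate B := by
    rw [hwv, vecMulVec_mul_vecMulVec', ← htsum]
  have hBadj : B * adjugate B = 0 := by
    rw [Matrix.mul_adjugate, h, zero_smul]
  have hadjB : adjugate B * B = 0 := by
    rw [Matrix.adjugate_mul, h, zero_smul]
  have hAadj : A * adjugate B = y • adjugate B := by
    have : A = B + y • 1 := by rw [hB]; abel
    rw [this, Matrix.add_mul, hBadj, Matrix.smul_mul, Matrix.one_mul, zero_add]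
  have hadjA : adjugate B * A = y • adjugate B := by
    have : A = B + y • 1 := by rw [hB]; abel
    rw [this, Matrix.mul_add, hadjB, Matrix.mul_smul, Matrix.mul_one, zero_add]
  refine ⟨?_, ?_, ?_, ?_⟩
  · rw [hP, Matrix.smul_mul, Matrix.mul_smul, hsq, smul_smul, smul_smul,
      mul_assoc, inv_mul_cancel₀ ht0, mul_one]
  · rw [hP, Matrix.mul_smul, hAadj, smul_comm]
  · rw [hP, Matrix.smul_mul, hadjA, smul_comm]
  · -- rank
    have hPne : P ≠ 0 := by
      intro h0
      have : Matrix.trace P = 0 := by rw [h0]; simp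
      rw [hP, Matrix.trace_smul, ← ht, smul_eq_mul, inv_mul_cancel₀ ht0] at this
      exact one_ne_zero this
    have hle : P.rank ≤ 1 := by
      have hPvv : P = vecMulVec (t⁻¹ • w) v := by
        rw [hP, hwv]
        ext i j
        simp [vecMulVec_apply, mul_assoc]
      rw [hPvv, Matrix.vecMulVec_eq (Fin 1)]
      calc (Matrix.replicateCol (Fin 1) (t⁻¹ • w) * Matrix.replicateRow (Fin 1) v).rank
          ≤ (Matrix.replicateCol (Fin 1) (t⁻¹ • w)).rank := Matrix.rank_mul_le_left _ _
        _ ≤ Fintype.card (Fin 1) := Matrix.rank_le_card_width _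
        _ = 1 := by simp
    have hge : P.rank ≠ 0 := by
      intro h0
      apply hPne
      have hr : LinearMap.range P.mulVecLin = ⊥ := Submodule.finrank_eq_zero.mp h0
      ext i j
      have : P.mulVecLin (Pi.single j 1) = 0 := by
        rw [← LinearMap.mem_ker, ← Submodule.comap_bot, ← hr]
        exact LinearMap.mem_range_self _ _
      have := congrFun this i
      simpa [Matrix.mulVecLin_apply] using this
    omega
end

section
/- Let L and H be N×N complex matrices and Y = L⁻¹H, where L is invertible and lower triangular with at most d subdiagonals (L_{ij} = 0 whenever i − j > d or i < j), and H is banded below with H_{ij} = 0 whenever i − j > m. Then for every index k, the submatrix of Y with rows {i : i > k + m + d} and columns {j : j ≤ k} has rank at most d. -/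
open Matrix

theorem hidden_rank_condition {N : ℕ} (L H Y : Matrix (Fin N) (Fin N) ℂ)
    (d m : ℕ) (hL : IsUnit L.det)
    (hLband : ∀ i j : Fin N, ((j : ℕ) + d < (i : ℕ) ∨ (i : ℕ) < (j : ℕ)) → L i j = 0)
    (hHband : ∀ i j : Fin N, (j : ℕ) + m < (i : ℕ) → H i j = 0)
    (hY : Y = L⁻¹ * H) :
    ∀ k : ℕ,
      (Y.submatrix (fun i : {i : Fin N // k + m + d < (i : ℕ)} => i.1)
        (fun j : {j : Fin N // (j : ℕ) ≤ k} => j.1)).rank ≤ d := by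
  intro k
  classical
  -- diagonal entries of L are nonzero
  have hdet : L.det = ∏ i, L i i :=
    Matrix.det_of_lowerTriangular L (fun i j hij => hLband i j (Or.inr hij))
  have hdetne : L.det ≠ 0 := hL.ne_zero
  have hdiag : ∀ i, L i i ≠ 0 := by
    intro i hzero
    apply hdetne
    rw [hdet]
    exact Finset.prod_eq_zero (Finset.mem_univ i) hzero
  have hLY : L * Y = H := by
    rw [hY, ← Matrix.mul_assoc, Matrix.mul_nonsing_inv L hL, Matrix.one_mul]
  set J := {j : Fin N // (j : ℕ) ≤ k}
  set r : Fin N → (J → ℂ) := fun i j => Y i j.1 with hr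
  set g : Fin d → (J → ℂ) := fun t =>
    if h : k + m + 1 + (t : ℕ) < N then r ⟨k + m + 1 + (t : ℕ), h⟩ else 0 with hg
  set S := Submodule.span ℂ (Set.range g) with hS
  have key : ∀ n : ℕ, ∀ i : Fin N, (i : ℕ) = n → k + m < (i : ℕ) → r i ∈ S := by
    intro n
    induction n using Nat.strong_induction_on with
    | _ n ih =>
      intro i hin him
      by_cases hcase : (i : ℕ) ≤ k + m + d
      · have ht : (i : ℕ) - (k + m + 1) < d := by omega
        apply Submodule.subset_span
        refine ⟨⟨(i : ℕ) - (k + m + 1), ht⟩, ?_⟩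
        have hlt : k + m + 1 + ((i : ℕ) - (k + m + 1)) < N := by
          have := i.isLt; omega
        rw [hg]
        simp only [dif_pos hlt]
        exact congrArg r (Fin.ext (by simp; omega))
      · have heq0 : ∀ j : J, ∑ l, L i l * Y l j.1 = 0 := by
          intro j
          have h1 : (L * Y) i j.1 = H i j.1 := by rw [hLY]
          rw [Matrix.mul_apply] at h1
          rw [h1]
          exact hHband i j.1 (by have := j.2; omega)
        have hrec : r i = (-(L i i)⁻¹) • ∑ l ∈ Finset.univ.erase i, L i l • r l := by
          funext j
          have h2 := heq0 j
          rw [← Finset.sum_erase_add _ _ (Finset.mem_univ i)] at h2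
          have hne := hdiag i
          simp only [Pi.smul_apply, Finset.sum_apply, smul_eq_mul, hr]
          field_simp
          linear_combination h2
        rw [hrec]
        refine S.smul_mem _ (Submodule.sum_mem _ ?_)
        intro l hl
        by_cases hz : L i l = 0
        · rw [hz, zero_smul]; exact S.zero_mem
        · have hlne : l ≠ i := Finset.ne_of_mem_erase hl
          have h1 : ¬(((l : ℕ) + d < (i : ℕ)) ∨ ((i : ℕ) < (l : ℕ))) := fun h => hz (hLband i l h)
          push_neg at h1
          have hlval : (l : ℕ) < n := by
            rcases h1 with ⟨ha, hb⟩
            have : (l : ℕ) ≠ (i : ℕ) := fun h => hlne (Fin.ext h)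
            omega
          exact S.smul_mem _ (ih (l : ℕ) hlval l rfl (by omega))
  -- now bound the rank
  set A := Y.submatrix (fun i : {i : Fin N // k + m + d < (i : ℕ)} => i.1)
      (fun j : J => j.1) with hA
  have h1 : A.rank = Aᵀ.rank := (Matrix.rank_transpose A).symm
  rw [h1, Matrix.rank_eq_finrank_span_cols, Matrix.col_transpose]
  have hsub : Submodule.span ℂ (Set.range A) ≤ S := by
    rw [Submodule.span_le]
    rintro _ ⟨i, rfl⟩
    have : A i = r i.1 := by funext j; rfl
    rw [this]
    exact key (i.1 : ℕ) i.1 rfl (by have := i.2; omega)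
  calc Module.finrank ℂ (Submodule.span ℂ (Set.range A))
      ≤ Module.finrank ℂ S := Submodule.finrank_mono hsub
    _ ≤ d := by
        refine (finrank_span_le_card _).trans ?_
        have := Fintype.card_range_le g
        rw [Set.toFinset_card]
        simpa using this
end
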